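/- arXiv:0812.0182 — 6 statements merged into one kernel-verified Lean document; each statement's English description precedes it below -/
import Mathlib

section
/- The minimal faithful permutation degree of the Coxeter group W(B_n) = C_2 wr Sym(n) is 2n. -/
noncomputable def minFaithfulDegree (G : Type*) [Group G] : ℕ :=
  sInf {n : ℕ | ∃ f : G →* Equiv.Perm (Fin n), Function.Injective f}

/-- The Coxeter group `W(B_n) = C₂ ≀ Sym(n)`, as the semidirect product of the base
group `(C₂)ⁿ` with `Sym(n)` permuting the coordinates. -/
abbrev WB (n : ℕ) : Type :=
  (Fin n → Multiplicative (ZMod 2)) ⋊[mulAutArrow] Equiv.Perm (Fin n)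

/-- The product-of-signs homomorphism `W(B_n) → C₂`. -/
noncomputable def signSum (n : ℕ) : WB n →* Multiplicative (ZMod 2) :=
  SemidirectProduct.lift
    (MonoidHom.mk' (fun f => ∏ i, f i) (by
      intro a b
      simp [Finset.prod_mul_distrib]))
    1
    (by
      intro σ
      refine MonoidHom.ext fun f => ?_
      simp only [MonoidHom.comp_apply, MulEquiv.coe_toMonoidHom, MonoidHom.mk'_apply,
        MulAut.conj_apply, MonoidHom.one_apply, mul_one, one_mul, inv_one]
      show (∏ i, mulAutArrow σ f i) = ∏ i, f i
      have h1 : ∀ i, mulAutArrow σ f i = f (σ⁻¹ i) := fun i => rfl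
      simp only [h1]
      exact Equiv.prod_comp σ⁻¹ f)

/-- The Coxeter group `W(D_n)`, the subgroup of even signed permutations in `W(B_n)`. -/
noncomputable abbrev WD (n : ℕ) : Subgroup (WB n) := (signSum n).ker

/-
The base group `(C₂)ⁿ` is abelian, so in a faithful action of it the stabiliser of a point fixes
its whole orbit; hence the group embeds into the product of its orbits, and `2ⁿ ≤ ∏ 2^cᵢ` where
the orbits have sizes `2^cᵢ`. Since `2c ≤ 2^c`, the degree `∑ 2^cᵢ` is at least `2 ∑ cᵢ ≥ 2n`.
Conversely `W(B_n)` acts faithfully on the `2n` signed letters `Fin n × C₂`.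
-/

theorem exists_injective_hom_perm_fin {G α : Type*} [Group G] [Finite α] {k : ℕ}
    (hα : Nat.card α = k) (f : G →* Equiv.Perm α) (hf : Function.Injective f) :
    ∃ f' : G →* Equiv.Perm (Fin k), Function.Injective f' :=
  ⟨(Equiv.permCongrHom (Finite.equivFinOfCardEq hα)).toMonoidHom.comp f,
    (Equiv.permCongrHom _).injective.comp hf⟩

namespace SemidirectProduct

variable {ι H : Type*} [Group H]

instance : MulAction ((ι → H) ⋊[mulAutArrow] Equiv.Perm ι) (ι × H) where
  smul g x := (g.right x.1, g.left (g.right x.1) * x.2)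
  one_smul _ := by simp [HSMul.hSMul]
  mul_smul _ _ _ := by simp [HSMul.hSMul, SMul.smul, mul_assoc]

theorem smul_prod_def (g : (ι → H) ⋊[mulAutArrow] Equiv.Perm ι) (x : ι × H) :
    g • x = (g.right x.1, g.left (g.right x.1) * x.2) :=
  rfl

instance : FaithfulSMul ((ι → H) ⋊[mulAutArrow] Equiv.Perm ι) (ι × H) where
  eq_of_smul_eq_smul {g₁ g₂} h := by
    have hright : g₁.right = g₂.right :=
      Equiv.ext fun i => congrArg Prod.fst (h (i, 1))
    refine SemidirectProduct.ext (funext fun i => ?_) hright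
    have := congrArg Prod.snd (h (g₁.right⁻¹ i, 1))
    simpa [smul_prod_def, hright] using this

end SemidirectProduct

namespace MulAction

variable {G α : Type*}

theorem card_eq_sum_card_orbit [Group G] [MulAction G α] [Finite α]
    [Fintype (orbitRel.Quotient G α)] :
    Nat.card α = ∑ ω : orbitRel.Quotient G α, Nat.card (orbit G ω.out) := by
  rw [Nat.card_congr (selfEquivSigmaOrbits G α), Nat.card_sigma]

theorem card_le_prod_card_orbit [CommGroup G] [MulAction G α] [FaithfulSMul G α] [Finite α]
    [Fintype (orbitRel.Quotient G α)] :
    Nat.card G ≤ ∏ ω : orbitRel.Quotient G α, Nat.card (orbit G ω.out) := by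
  have hinj : Function.Injective fun (g : G) (ω : orbitRel.Quotient G α) =>
      (⟨g • ω.out, mem_orbit _ _⟩ : orbit G ω.out) := by
    intro g₁ g₂ h
    refine eq_of_smul_eq_smul (α := α) fun x => ?_
    set y := (Quotient.mk (orbitRel G α) x).out
    obtain ⟨k, hk : k • x = y⟩ := orbitRel_apply.mp (Quotient.mk_out (s := orbitRel G α) x)
    have hout : g₁ • y = g₂ • y := congrArg Subtype.val (congrFun h _)
    rw [← hk, smul_comm g₁ k, smul_comm g₂ k] at hout
    exact smul_left_cancel k hout
  simpa only [Nat.card_pi] using Nat.card_le_card_of_injective _ hinj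

theorem prime_mul_le_card_of_faithful [CommGroup G] [MulAction G α] [FaithfulSMul G α]
    [Finite α] {p n : ℕ} [hp : Fact p.Prime] (hG : Nat.card G = p ^ n) :
    p * n ≤ Nat.card α := by
  have := Fintype.ofFinite (orbitRel.Quotient G α)
  choose c hc using fun ω : orbitRel.Quotient G α => (IsPGroup.of_card hG).card_orbit ω.out
  have hexp : n ≤ ∑ ω, c ω := by
    rw [← Nat.pow_le_pow_iff_right hp.out.one_lt, ← Finset.prod_pow_eq_pow_sum, ← hG]
    simpa only [hc] using card_le_prod_card_orbit (G := G) (α := α)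
  calc p * n ≤ ∑ ω, p * c ω := by rw [← Finset.mul_sum]; exact Nat.mul_le_mul_left p hexp
    _ ≤ ∑ ω, p ^ c ω := Finset.sum_le_sum fun ω _ => Nat.mul_le_pow hp.out.ne_one _
    _ = Nat.card α := by simp only [card_eq_sum_card_orbit (G := G), hc]

end MulAction

theorem Equiv.Perm.prime_mul_le_card_of_injective {G α : Type*} [CommGroup G] [Finite α]
    {p n : ℕ} [Fact p.Prime] (f : G →* Equiv.Perm α) (hf : Function.Injective f)
    (hG : Nat.card G = p ^ n) : p * n ≤ Nat.card α :=
  letI := MulAction.compHom α f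
  haveI : FaithfulSMul G α := ⟨fun h => hf (Equiv.ext h)⟩
  MulAction.prime_mul_le_card_of_faithful hG

/-- The minimal faithful permutation degree of `W(B_n) = C₂ ≀ Sym(n)` is `2n`. -/
theorem mu_WB (n : ℕ) : minFaithfulDegree (WB n) = 2 * n := by
  have hupper : ∃ f : WB n →* Equiv.Perm (Fin (2 * n)), Function.Injective f :=
    exists_injective_hom_perm_fin (by simp [mul_comm])
      (MulAction.toPermHom (WB n) (Fin n × Multiplicative (ZMod 2))) MulAction.toPerm_injective
  refine le_antisymm (Nat.sInf_le hupper) (le_csInf ⟨_, hupper⟩ ?_)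
  rintro m ⟨f, hf⟩
  simpa using Equiv.Perm.prime_mul_le_card_of_injective (p := 2) (n := n)
    (f.comp SemidirectProduct.inl) (hf.comp SemidirectProduct.inl_injective) (by simp)
end

section
/- The quaternion group Q_8 embeds in the group W(D_4) of even signed permutations of rank 4, and consequently μ(W(D_4)) = 8. -/
/-!
`Q₈` acts on the basis `1, i, j, k` of `ℍ` by left multiplication through even signed
permutations, which gives the embedding. For `μ(W(D₄)) = 8`: the signed permutations of rank `4`
act faithfully on the eight points `±eᵢ`, while `|W(D₄)| = 2³ · 4! = 192 = 2⁶ · 3` does not divide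
`7! = 2⁴ · 3² · 5 · 7`, so `W(D₄)` is not a subgroup of `Sym(m)` for any `m ≤ 7`.
-/

open Equiv Function

section MinFaithfulDegree

variable {G : Type*} [Group G]

theorem exists_injective_perm_fin_card {α : Type*} [Finite α] {f : G →* Perm α}
    (hf : Injective f) : ∃ f' : G →* Perm (Fin (Nat.card α)), Injective f' :=
  ⟨(permCongrHom (Finite.equivFin α)).toMonoidHom.comp f,
    (permCongrHom (Finite.equivFin α)).injective.comp hf⟩

theorem minFaithfulDegree_le_card {α : Type*} [Finite α] {f : G →* Perm α} (hf : Injective f) :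
    minFaithfulDegree G ≤ Nat.card α :=
  Nat.sInf_le (exists_injective_perm_fin_card hf)

theorem card_dvd_factorial_of_injective {n : ℕ} {f : G →* Perm (Fin n)} (hf : Injective f) :
    Nat.card G ∣ n.factorial := by
  simpa [Nat.card_congr (MonoidHom.ofInjective hf).toEquiv, Fintype.card_perm] using
    f.range.card_subgroup_dvd_card

theorem lt_minFaithfulDegree_of_not_dvd_factorial {α : Type*} [Finite α] {f : G →* Perm α}
    (hf : Injective f) {m : ℕ} (hm : ¬ Nat.card G ∣ m.factorial) : m < minFaithfulDegree G := by
  obtain ⟨g, hg⟩ : minFaithfulDegree G ∈ {n : ℕ | ∃ f : G →* Perm (Fin n), Injective f} :=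
    Nat.sInf_mem ⟨_, exists_injective_perm_fin_card hf⟩
  by_contra! h
  exact hm ((card_dvd_factorial_of_injective hg).trans (Nat.factorial_dvd_factorial h))

end MinFaithfulDegree

section Wreath

variable {ι H : Type*} [Group H]

def wreathToPerm : (ι → H) ⋊[mulAutArrow] Perm ι →* Perm (ι × H) where
  toFun g := prodShear g.right fun i => Equiv.mulLeft (g.left (g.right i))
  map_one' := by ext <;> simp
  map_mul' g g' := by
    ext ⟨i, h⟩
    · rfl
    · simp only [prodShear, SemidirectProduct.mul_right, Perm.coe_mul, comp_apply,
        SemidirectProduct.mul_left, Pi.mul_apply, mulAutArrow_apply_apply, mulLeft_mul, coe_mulLeft,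
        apply_symm_apply, coe_fn_mk, mulLeft_symm, mul_right_inj, mul_left_inj]
      -- `(σ • f) j = f (σ⁻¹ j)` holds definitionally for `mulAutArrow`
      exact congrArg g'.left (g.right.symm_apply_apply _)

theorem wreathToPerm_apply (g : (ι → H) ⋊[mulAutArrow] Perm ι) (i : ι) (h : H) :
    wreathToPerm g (i, h) = (g.right i, g.left (g.right i) * h) :=
  rfl

theorem wreathToPerm_injective : Injective (wreathToPerm : (ι → H) ⋊[mulAutArrow] Perm ι →* _) := by
  rw [injective_iff_map_eq_one]
  intro g hg
  have hfix (i : ι) (h : H) : (g.right i, g.left (g.right i) * h) = (i, h) := by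
    rw [← wreathToPerm_apply, hg, Perm.one_apply]
  have hright : g.right = 1 := Equiv.ext fun i => congrArg Prod.fst (hfix i 1)
  refine SemidirectProduct.ext (funext fun i => ?_) hright
  simpa [hright] using congrArg Prod.snd (hfix i 1)

end Wreath

theorem card_WB (n : ℕ) : Nat.card (WB n) = 2 ^ n * n.factorial := by
  simp [SemidirectProduct.card, Fintype.card_perm]

theorem signSum_surjective {n : ℕ} (hn : n ≠ 0) : Surjective (signSum n) := by
  intro s
  refine ⟨SemidirectProduct.inl (Pi.mulSingle ⟨0, Nat.pos_of_ne_zero hn⟩ s), ?_⟩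
  simp [signSum]

theorem card_WD_mul_two {n : ℕ} (hn : n ≠ 0) : Nat.card (WD n) * 2 = 2 ^ n * n.factorial := by
  rw [← card_WB, ← (WD n).card_mul_index, Subgroup.index_ker,
    MonoidHom.range_eq_top.mpr (signSum_surjective hn)]
  simp

section Quaternion

-- The derived instance decides `Perm` components by transport along their equality, which
-- `decide` cannot reduce; transferring from `N × G` compares them pointwise.
abbrev SemidirectProduct.decidableEqOfProd {N G : Type*} [Group N] [Group G] {φ : G →* MulAut N}
    [DecidableEq N] [DecidableEq G] : DecidableEq (N ⋊[φ] G) :=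
  SemidirectProduct.equivProd.decidableEq

attribute [local instance] SemidirectProduct.decidableEqOfProd

-- Left multiplication by `i` and by `j` on `ℍ`, in the basis `1, i, j, k`.
def quaternionI : WB 4 :=
  ⟨![Multiplicative.ofAdd 1, 1, Multiplicative.ofAdd 1, 1], swap 0 1 * swap 2 3⟩

def quaternionJ : WB 4 :=
  ⟨![Multiplicative.ofAdd 1, 1, 1, Multiplicative.ofAdd 1], swap 0 2 * swap 1 3⟩

def quaternionToWB : QuaternionGroup 2 →* WB 4 :=
  MonoidHom.mk'
    (fun | .a k => quaternionI ^ k.val | .xa k => quaternionJ * quaternionI ^ k.val)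
    (by decide)

theorem quaternionToWB_injective : Injective quaternionToWB := by
  rw [injective_iff_map_eq_one]
  decide

theorem quaternionToWB_mem_WD (q : QuaternionGroup 2) : quaternionToWB q ∈ WD 4 := by
  revert q
  decide

end Quaternion

/-- The quaternion group `Q₈` embeds in `W(D₄)`, the group of even signed permutations
of rank `4`, and consequently `μ(W(D₄)) = 8`. -/
theorem Q8_embeds_WD4_and_mu :
    (∃ f : QuaternionGroup 2 →* ↥(WD 4), Function.Injective f) ∧
      minFaithfulDegree ↥(WD 4) = 8 := by
  have hWD : Nat.card (WD 4) = 192 :=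
    Nat.eq_of_mul_eq_mul_right two_pos ((card_WD_mul_two four_ne_zero).trans (by decide))
  let faithful : WD 4 →* Perm (Fin 4 × Multiplicative (ZMod 2)) :=
    wreathToPerm.comp (WD 4).subtype
  have hfaithful : Injective faithful := wreathToPerm_injective.comp (WD 4).subtype_injective
  refine ⟨⟨_, (quaternionToWB.injective_codRestrict _ quaternionToWB_mem_WD).mpr
    quaternionToWB_injective⟩, le_antisymm ?_ ?_⟩
  · simpa using minFaithfulDegree_le_card hfaithful
  · exact lt_minFaithfulDegree_of_not_dvd_factorial hfaithful (m := 7) (by rw [hWD]; decide)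
end

section
/- The Coxeter group W(H_3) ≅ C_2 × Alt(5) has minimal faithful permutation degree 7. -/
open Equiv Subgroup
open scoped Nat

def EmbedsInPerm (G α : Type*) [Group G] : Prop :=
  ∃ f : G →* Perm α, Function.Injective f

namespace EmbedsInPerm

variable {G H α β : Type*} [Group G] [Group H]

theorem of_embedding (h : EmbedsInPerm G α) (e : α ↪ β) : EmbedsInPerm G β :=
  let ⟨f, hf⟩ := h
  ⟨(Perm.viaEmbeddingHom e).comp f, (Perm.viaEmbeddingHom_injective e).comp hf⟩

theorem prod (hG : EmbedsInPerm G α) (hH : EmbedsInPerm H β) : EmbedsInPerm (G × H) (α ⊕ β) :=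
  let ⟨f, hf⟩ := hG
  let ⟨g, hg⟩ := hH
  ⟨(Perm.sumCongrHom α β).comp (f.prodMap g), Perm.sumCongrHom_injective.comp (hf.prodMap hg)⟩

variable (G) in
theorem self : EmbedsInPerm G G :=
  ⟨MulAction.toPermHom G G, MulAction.toPerm_injective⟩

theorem subgroup (K : Subgroup (Perm α)) : EmbedsInPerm K α :=
  ⟨K.subtype, K.subtype_injective⟩

end EmbedsInPerm

theorem minFaithfulDegree_eq_succ {G : Type*} [Group G] {n : ℕ}
    (h : EmbedsInPerm G (Fin (n + 1))) (h' : ¬ EmbedsInPerm G (Fin n)) :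
    minFaithfulDegree G = n + 1 := by
  refine le_antisymm (Nat.sInf_le h) (le_csInf ⟨_, h⟩ fun m hm => ?_)
  by_contra! hlt
  exact h' (EmbedsInPerm.of_embedding hm (Fin.castLEEmb (Nat.lt_succ_iff.mp hlt)))

namespace Equiv.Perm

variable {α : Type*} [Fintype α] [DecidableEq α]

theorem nat_card_centralizer_of_cycleType_eq_replicate_two {g : Perm α} {k : ℕ}
    (hg : g.cycleType = Multiset.replicate k 2) :
    Nat.card (centralizer {g}) = (Fintype.card α - 2 * k)! * 2 ^ k * k ! := by
  rcases k.eq_zero_or_pos with rfl | hk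
  · simp [nat_card_centralizer, hg]
  · simp [nat_card_centralizer, hg, Multiset.toFinset_replicate, hk.ne', mul_comm]

theorem nat_card_centralizer_le_of_orderOf_eq_two (hα : Fintype.card α = 6) {g : Perm α}
    (hg : orderOf g = 2) : Nat.card (centralizer {g}) ≤ 48 := by
  obtain ⟨k, hk⟩ := cycleType_prime_order (hg ▸ Nat.prime_two)
  rw [hg] at hk
  have hk2 : k ≤ 2 := by
    have := g.support.card_le_univ
    rw [← sum_cycleType, hk, Multiset.sum_replicate, smul_eq_mul, hα] at this
    omega
  rw [nat_card_centralizer_of_cycleType_eq_replicate_two hk, hα]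
  interval_cases k <;> decide

end Equiv.Perm

theorem nat_card_le_nat_card_centralizer_of_injective {G H : Type*} [Group G] [Group H] [Finite H]
    {f : G →* H} (hf : Function.Injective f) {z : G} (hz : z ∈ center G) :
    Nat.card G ≤ Nat.card (centralizer {f z}) := by
  have hrange : f.range ≤ centralizer {f z} := by
    rintro _ ⟨g, rfl⟩
    rw [mem_centralizer_singleton_iff, ← map_mul, ← map_mul, mem_center_iff.mp hz g]
  calc Nat.card G = Nat.card f.range := (Nat.card_range_of_injective hf).symm
    _ ≤ _ := card_le_of_le hrange

theorem not_embedsInPerm_of_mem_center_of_orderOf_eq_two {G α : Type*} [Group G] [Fintype α]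
    (hα : Fintype.card α = 6) {z : G} (hz : z ∈ center G) (hz2 : orderOf z = 2)
    (hG : 48 < Nat.card G) : ¬ EmbedsInPerm G α := by
  classical
  rintro ⟨f, hf⟩
  have := Perm.nat_card_centralizer_le_of_orderOf_eq_two hα
    ((orderOf_injective f hf z).trans hz2)
  have := nat_card_le_nat_card_centralizer_of_injective hf hz
  omega

/-- The Coxeter group `W(H₃) ≅ C₂ × Alt(5)` has minimal faithful permutation
degree `7`. -/
theorem mu_WH3 :
    minFaithfulDegree (Multiplicative (ZMod 2) × ↥(alternatingGroup (Fin 5))) = 7 := by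
  set z : Multiplicative (ZMod 2) × alternatingGroup (Fin 5) := (Multiplicative.ofAdd 1, 1)
  have hz : z ∈ center _ := by
    rw [Subgroup.center_prod]
    exact ⟨mem_center_iff.mpr fun g => mul_comm g _, one_mem _⟩
  have hz2 : orderOf z = 2 := orderOf_eq_prime (by decide) (by decide)
  have hcard : Nat.card (Multiplicative (ZMod 2) × alternatingGroup (Fin 5)) = 120 := by
    rw [Nat.card_prod, nat_card_alternatingGroup]
    simp [Nat.factorial]
  apply minFaithfulDegree_eq_succ
  · exact ((EmbedsInPerm.self _).prod (EmbedsInPerm.subgroup _)).of_embedding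
      ((sumCongr (Fintype.equivFinOfCardEq rfl) (Equiv.refl _)).trans finSumFinEquiv).toEmbedding
  · exact not_embedsInPerm_of_mem_center_of_orderOf_eq_two (Fintype.card_fin 6) hz hz2 (by omega)
end

section
/- Every core-free subgroup L of the central product T ∘ T of two binary tetrahedral groups has index at least 24; hence μ(T ∘ T) = 24. -/
instance Subgroup.center.commGroup (G : Type*) [Group G] : CommGroup (Subgroup.center G) :=
  { (Subgroup.center G).toGroup with mul_comm := fun a b => mul_comm' a b }

/-- The anti-diagonal copy `{(z, z⁻¹) | z ∈ Z(G)}` of the center inside `G × G`. -/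
noncomputable def centerAntidiag (G : Type*) [Group G] : Subgroup (G × G) :=
  ((Subgroup.center G).subtype.prod ((Subgroup.center G).subtype.comp invMonoidHom)).range

instance centerAntidiag_normal (G : Type*) [Group G] : (centerAntidiag G).Normal := by
  constructor
  rintro p ⟨⟨z, hz⟩, hp⟩ ⟨g, h⟩
  refine ⟨⟨z, hz⟩, ?_⟩
  have hp' : p = (z, z⁻¹) := hp.symm
  subst hp'
  have h1 : g * z * g⁻¹ = z := by
    rw [Subgroup.mem_center_iff.mp hz g]; group
  have h2 : h * z⁻¹ * h⁻¹ = z⁻¹ := by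
    rw [Subgroup.mem_center_iff.mp (Subgroup.inv_mem _ hz) h]; group
  show ((z : G), (z⁻¹ : G)) = (g, h) * (z, z⁻¹) * (g, h)⁻¹
  simp only [Prod.mk_mul_mk, Prod.inv_mk]
  exact Prod.ext h1.symm h2.symm

/-- The central product `G ∘ G`, the quotient of `G × G` by the (anti)diagonal
copy of the center. -/
noncomputable def centralProduct (G : Type*) [Group G] : Type _ :=
  (G × G) ⧸ centerAntidiag G

noncomputable instance (G : Type*) [Group G] : Group (centralProduct G) :=
  QuotientGroup.Quotient.group _

/-- The binary tetrahedral group, realized as `SL(2, F₃)`. -/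
abbrev binaryTetrahedral : Type := Matrix.SpecialLinearGroup (Fin 2) (ZMod 3)

/-!
A core-free subgroup `L` of `T ∘ T` cannot contain the central involution `z`, the common image
of `(-1, 1)` and `(1, -1)`. Its preimage `M ≤ T × T` then avoids both, so the Goursat kernels
`M₁ = {a | (a, 1) ∈ M}` and `M₂ = {b | (1, b) ∈ M}` avoid `-1`, the only involution of
`T = SL(2, 3)`, and have order `1` or `3`. As `|M| = |M₁| · |π₂ M|` and `T` has no subgroup of
order 12 (every element is a product of two squares), `|M| > 24` would force `|M| = 72` with both
projections onto, making `M₁` a normal subgroup of order 3 of `T`; there is none. Hence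
`[T ∘ T : L] = 576 / |M| ≥ 24`.

In a faithful action on `n` points some point stabiliser misses `z`, so `n ≥ 24`. Conversely,
since `Z(T)` has exponent 2, the diagonal copy of `T` is core-free of index `24`.
-/

namespace Subgroup

variable {G H : Type*} [Group G] [Group H]

theorem map_inl_goursatFst (I : Subgroup (G × H)) :
    I.goursatFst.map (MonoidHom.inl G H) = (MonoidHom.snd G H).ker ⊓ I := by
  ext ⟨g, h⟩
  simp only [mem_map, mem_goursatFst, MonoidHom.inl_apply, Prod.mk.injEq, mem_inf,
    MonoidHom.mem_ker]
  constructor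
  · rintro ⟨x, hx, rfl, rfl⟩
    exact ⟨rfl, hx⟩
  · rintro ⟨rfl, hI⟩
    exact ⟨g, hI, rfl, rfl⟩

theorem map_inr_goursatSnd (I : Subgroup (G × H)) :
    I.goursatSnd.map (MonoidHom.inr G H) = (MonoidHom.fst G H).ker ⊓ I := by
  ext ⟨g, h⟩
  simp only [mem_map, mem_goursatSnd, MonoidHom.inr_apply, Prod.mk.injEq, mem_inf,
    MonoidHom.mem_ker]
  constructor
  · rintro ⟨x, hx, rfl, rfl⟩
    exact ⟨rfl, hx⟩
  · rintro ⟨rfl, hI⟩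
    exact ⟨h, hI, rfl, rfl⟩

theorem card_goursatFst_mul_card_map_snd (I : Subgroup (G × H)) :
    Nat.card I.goursatFst * Nat.card (I.map (MonoidHom.snd G H)) = Nat.card I := by
  have h := relIndex_inf_mul_relIndex ⊥ (MonoidHom.snd G H).ker I
  rwa [relIndex_bot_left, relIndex_ker, bot_inf_eq, relIndex_bot_left, ← map_inl_goursatFst,
    card_map_of_injective fun _ _ h => congrArg Prod.fst h] at h

theorem card_goursatSnd_mul_card_map_fst (I : Subgroup (G × H)) :
    Nat.card I.goursatSnd * Nat.card (I.map (MonoidHom.fst G H)) = Nat.card I := by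
  have h := relIndex_inf_mul_relIndex ⊥ (MonoidHom.fst G H).ker I
  rwa [relIndex_bot_left, relIndex_ker, bot_inf_eq, relIndex_bot_left, ← map_inr_goursatSnd,
    card_map_of_injective fun _ _ h => congrArg Prod.snd h] at h

theorem odd_card_of_notMem_of_unique_involution [Finite G] {z : G}
    (hz : ∀ x : G, x * x = 1 → x = 1 ∨ x = z) {S : Subgroup G} (hS : z ∉ S) : Odd (Nat.card S) := by
  rw [Nat.odd_iff, ← Nat.two_dvd_ne_zero]
  intro h2
  obtain ⟨x, hx⟩ := exists_prime_orderOf_dvd_card' 2 h2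
  have hx2 : (x : G) * x = 1 := by
    rw [← sq, ← Subgroup.coe_pow, ← hx, pow_orderOf_eq_one, Subgroup.coe_one]
  rcases hz x hx2 with h1 | hxz
  · rw [OneMemClass.coe_eq_one.1 h1, orderOf_one] at hx
    exact absurd hx (by norm_num)
  · exact hS (hxz ▸ x.2)

theorem index_ne_two_of_forall_eq_mul_self_mul_mul_self
    (h : ∀ t : G, ∃ a b : G, a * a * (b * b) = t) (S : Subgroup G) : S.index ≠ 2 := by
  intro h2
  have htop : S = ⊤ := eq_top_iff.2 fun t _ => by
    obtain ⟨a, b, rfl⟩ := h t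
    exact S.mul_mem (mul_self_mem_of_index_two h2 a) (mul_self_mem_of_index_two h2 b)
  rw [htop, index_top] at h2
  exact absurd h2 (by norm_num)

theorem not_normal_of_card_eq_three [Finite G]
    (h : ∀ c : G, c ^ 3 = 1 → c ≠ 1 → ∃ g : G, g * c * g⁻¹ ≠ c ∧ g * c * g⁻¹ ≠ c ^ 2)
    {N : Subgroup G} (hN : Nat.card N = 3) : ¬ N.Normal := by
  classical
  intro hnormal
  obtain ⟨⟨c, hcN⟩, hc1⟩ := ne_bot_iff_exists_ne_one.1 (N.one_lt_card_iff_ne_bot.1 (by omega))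
  replace hc1 : c ≠ 1 := by simpa using hc1
  have horder : orderOf c = 3 :=
    (Nat.prime_three.eq_one_or_self_of_dvd _ (hN ▸ N.orderOf_dvd_natCard hcN)).resolve_left
      (orderOf_eq_one_iff.not.2 hc1)
  have hzpowers : zpowers c = N :=
    eq_of_le_of_card_ge (zpowers_le.2 hcN) (by rw [Nat.card_zpowers, horder, hN])
  obtain ⟨g, hgc, hgc2⟩ := h c (horder ▸ pow_orderOf_eq_one c) hc1
  have hconj : g * c * g⁻¹ ∈ zpowers c := hzpowers ▸ hnormal.conj_mem c hcN g
  rw [mem_zpowers_iff_mem_range_orderOf, horder] at hconj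
  simp only [Finset.mem_image, Finset.mem_range] at hconj
  obtain ⟨k, hk, hck⟩ := hconj
  interval_cases k
  · exact hc1 (by simpa [eq_comm, mul_inv_eq_one] using hck)
  · exact hgc (by simpa using hck.symm)
  · exact hgc2 hck.symm

theorem mem_normalCore_of_mem_center {L : Subgroup G} {z : G} (hz : z ∈ center G)
    (hzL : z ∈ L) :
    z ∈ L.normalCore := fun g => by
  rwa [mem_center_iff.1 hz g, mul_inv_cancel_right]

end Subgroup

section FaithfulDegree

variable {G : Type*} [Group G]

theorem exists_injective_perm_fin_index_of_normalCore_eq_bot {H : Subgroup G} [H.FiniteIndex]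
    (hH : H.normalCore = ⊥) : ∃ f : G →* Equiv.Perm (Fin H.index), Function.Injective f := by
  have hinj : Function.Injective (MulAction.toPermHom G (G ⧸ H)) := by
    rw [← MonoidHom.ker_eq_bot_iff, ← Subgroup.normalCore_eq_ker, hH]
  let e : G ⧸ H ≃ Fin H.index := Finite.equivFin (G ⧸ H)
  exact ⟨(Equiv.permCongrHom e).toMonoidHom.comp (MulAction.toPermHom G (G ⧸ H)),
    (Equiv.permCongrHom e).injective.comp hinj⟩

theorem le_of_injective_perm_fin {z : G} (hz : z ≠ 1) {m : ℕ}
    (hindex : ∀ L : Subgroup G, z ∉ L → m ≤ L.index) {n : ℕ} (f : G →* Equiv.Perm (Fin n))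
    (hf : Function.Injective f) : m ≤ n := by
  obtain ⟨i, hi⟩ : ∃ i, f z i ≠ i := by
    by_contra! h
    exact hz (hf (by rw [map_one]; exact Equiv.ext h))
  let _ : MulAction G (Fin n) := MulAction.compHom _ f
  calc m ≤ (MulAction.stabilizer G i).index := hindex _ hi
    _ = (MulAction.orbit G i).ncard := MulAction.index_stabilizer G i
    _ ≤ n := by
      simpa using Set.ncard_le_ncard (Set.subset_univ (MulAction.orbit G i)) Set.finite_univ

theorem minFaithfulDegree_eq {m : ℕ} (hm : ∃ f : G →* Equiv.Perm (Fin m), Function.Injective f)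
    (hle : ∀ n (f : G →* Equiv.Perm (Fin n)), Function.Injective f → m ≤ n) :
    minFaithfulDegree G = m :=
  le_antisymm (Nat.sInf_le hm) (le_csInf ⟨m, hm⟩ fun n ⟨f, hf⟩ => hle n f hf)

end FaithfulDegree

namespace centralProduct

open Subgroup

variable {G : Type*} [Group G]

instance [Finite G] : Finite (centralProduct G) := Quotient.finite _

noncomputable def mk : G × G →* centralProduct G := QuotientGroup.mk' (centerAntidiag G)

theorem mk_surjective : Function.Surjective (mk (G := G)) := QuotientGroup.mk'_surjective _

theorem mem_centerAntidiag {p : G × G} :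
    p ∈ centerAntidiag G ↔ p.1 ∈ center G ∧ p.2 = p.1⁻¹ := by
  constructor
  · rintro ⟨⟨c, hc⟩, rfl⟩
    exact ⟨hc, rfl⟩
  · rintro ⟨hc, h⟩
    exact ⟨⟨p.1, hc⟩, Prod.ext rfl h.symm⟩

theorem mk_eq_mk_iff {p q : G × G} : mk p = mk q ↔ p⁻¹ * q ∈ centerAntidiag G :=
  QuotientGroup.eq

theorem mk_eq_one_iff {p : G × G} : mk p = 1 ↔ p ∈ centerAntidiag G :=
  QuotientGroup.eq_one_iff p

theorem mk_inl_eq_mk_inr {c : G} (hc : c ∈ center G) : mk (c, 1) = mk (1, c) := by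
  rw [mk_eq_mk_iff, mem_centerAntidiag]
  simpa using inv_mem hc

theorem mk_inl_ne_one {c : G} (hc : c ≠ 1) : mk (c, 1) ≠ 1 := by
  rw [Ne, mk_eq_one_iff, mem_centerAntidiag]
  exact fun ⟨_, h⟩ => hc (by simpa [eq_comm] using h)

theorem mk_inl_mem_center {c : G} (hc : c ∈ center G) :
    mk (c, 1) ∈ center (centralProduct G) := by
  rw [mem_center_iff]
  intro x
  obtain ⟨⟨a, b⟩, rfl⟩ := mk_surjective x
  rw [← map_mul, ← map_mul, Prod.mk_mul_mk, Prod.mk_mul_mk, mem_center_iff.1 hc a, mul_one,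
    one_mul]

theorem card_mul_card_center :
    Nat.card (centralProduct G) * Nat.card (center G) = Nat.card G ^ 2 := by
  have hinj : Function.Injective
      ((center G).subtype.prod ((center G).subtype.comp invMonoidHom)) :=
    fun c d h => Subtype.ext (congrArg Prod.fst h)
  rw [sq, ← Nat.card_prod G G, card_eq_card_quotient_mul_card_subgroup (centerAntidiag G),
    centerAntidiag, ← index_ker, (MonoidHom.ker_eq_bot_iff _).2 hinj, index_bot]
  rfl

noncomputable def diag : G →* centralProduct G :=
  mk.comp ((MonoidHom.id G).prod (MonoidHom.id G))

theorem diag_apply (t : G) : diag t = mk (t, t) := rfl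

theorem ker_diag (hZ : ∀ c ∈ center G, c * c = 1) :
    (diag : G →* centralProduct G).ker = center G := by
  ext t
  rw [MonoidHom.mem_ker, diag_apply, mk_eq_one_iff, mem_centerAntidiag]
  exact ⟨And.left, fun ht => ⟨ht, eq_inv_of_mul_eq_one_left (hZ t ht)⟩⟩

theorem normalCore_range_diag (hZ : ∀ c ∈ center G, c * c = 1) :
    (diag : G →* centralProduct G).range.normalCore = ⊥ := by
  refine eq_bot_iff.2 fun x hx => ?_
  obtain ⟨t, rfl⟩ := normalCore_le _ hx
  rw [mem_bot, ← MonoidHom.mem_ker, ker_diag hZ, mem_center_iff]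
  intro a
  obtain ⟨s, hs⟩ := hx (mk (a, 1))
  rw [diag_apply, diag_apply, ← map_inv, ← map_mul, ← map_mul, mk_eq_mk_iff,
    mem_centerAntidiag] at hs
  simp only [Prod.inv_mk, Prod.mk_mul_mk, mul_one, inv_one] at hs
  obtain ⟨hc, hst⟩ := hs
  rw [← inv_eq_of_mul_eq_one_right (hZ _ hc), inv_inv, one_mul] at hst
  exact (eq_mul_inv_iff_mul_eq.1 (mul_left_cancel hst)).symm

theorem index_range_diag [Finite G] (hZ : ∀ c ∈ center G, c * c = 1) :
    (diag : G →* centralProduct G).range.index = Nat.card G := by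
  set D := (diag : G →* centralProduct G).range
  have hD : (center G).index = Nat.card D := by rw [← ker_diag hZ, index_ker]
  refine Nat.eq_of_mul_eq_mul_left (Nat.card_pos (α := G)) ?_
  calc Nat.card G * D.index = Nat.card (center G) * (Nat.card D * D.index) := by
        rw [← card_mul_index (center G), hD, mul_assoc]
    _ = Nat.card G * Nat.card G := by rw [card_mul_index, mul_comm, card_mul_card_center, sq]

end centralProduct

namespace binaryTetrahedral

open Subgroup

theorem natCard_eq : Nat.card binaryTetrahedral = 24 := by
  rw [Nat.card_eq_fintype_card]
  decide

theorem neg_one_mem_center : (-1 : binaryTetrahedral) ∈ center binaryTetrahedral := by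
  decide

theorem mul_self_eq_one_of_mem_center :
    ∀ c ∈ center binaryTetrahedral, c * c = 1 := by
  decide

theorem eq_one_or_eq_neg_one_of_mul_self_eq_one :
    ∀ x : binaryTetrahedral, x * x = 1 → x = 1 ∨ x = -1 := by
  decide

theorem exists_mul_self_mul_mul_self_eq :
    ∀ t : binaryTetrahedral, ∃ a b : binaryTetrahedral, a * a * (b * b) = t := by
  decide

theorem exists_conj_ne_of_pow_three_eq_one : ∀ c : binaryTetrahedral, c ^ 3 = 1 → c ≠ 1 →
    ∃ g : binaryTetrahedral, g * c * g⁻¹ ≠ c ∧ g * c * g⁻¹ ≠ c ^ 2 := by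
  decide

theorem card_eq_one_or_three_of_neg_one_notMem {S : Subgroup binaryTetrahedral} (hS : -1 ∉ S) :
    Nat.card S = 1 ∨ Nat.card S = 3 := by
  have hodd := odd_card_of_notMem_of_unique_involution eq_one_or_eq_neg_one_of_mul_self_eq_one hS
  have hdvd := natCard_eq ▸ S.card_subgroup_dvd_card
  have hle := Nat.le_of_dvd (by norm_num) hdvd
  interval_cases h : Nat.card S <;> simp_all +decide

theorem card_ne_twelve (S : Subgroup binaryTetrahedral) : Nat.card S ≠ 12 := by
  intro h12
  apply index_ne_two_of_forall_eq_mul_self_mul_mul_self exists_mul_self_mul_mul_self_eq S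
  have := S.card_mul_index
  rw [h12, natCard_eq] at this
  omega

theorem card_le_of_notMem_prod (M : Subgroup (binaryTetrahedral × binaryTetrahedral))
    (h₁ : (-1, 1) ∉ M) (h₂ : (1, -1) ∉ M) : Nat.card M ≤ 24 := by
  have hfst := card_eq_one_or_three_of_neg_one_notMem (S := M.goursatFst) (by simpa using h₁)
  have hsnd := card_eq_one_or_three_of_neg_one_notMem (S := M.goursatSnd) (by simpa using h₂)
  have hM₁ := M.card_goursatFst_mul_card_map_snd
  have hM₂ := M.card_goursatSnd_mul_card_map_fst
  have hP₂ := natCard_eq ▸ card_subgroup_dvd_card (M.map (MonoidHom.snd _ _))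
  have hP₁le := Nat.le_of_dvd (by norm_num)
    (natCard_eq ▸ card_subgroup_dvd_card (M.map (MonoidHom.fst _ _)))
  have hP₂le := Nat.le_of_dvd (by norm_num) hP₂
  have hP₂12 := card_ne_twelve (M.map (MonoidHom.snd _ _))
  by_contra! hlt
  have hfst3 : Nat.card M.goursatFst = 3 := hfst.resolve_left fun h => by rw [h] at hM₁; omega
  rw [hfst3] at hM₁
  have hP₂24 : Nat.card (M.map (MonoidHom.snd _ _)) = 24 := by
    interval_cases Nat.card (M.map (MonoidHom.snd _ _)) <;> omega
  have hsurj : M.map (MonoidHom.fst _ _) = ⊤ := by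
    refine eq_top_of_card_eq _ (natCard_eq ▸ ?_)
    rcases hsnd with h | h <;> rw [h] at hM₂ <;> omega
  refine not_normal_of_card_eq_three exists_conj_ne_of_pow_three_eq_one hfst3
    (normal_goursatFst fun g => ?_)
  obtain ⟨x, hx, rfl⟩ := mem_map.1 (hsurj ▸ mem_top g)
  exact ⟨⟨x, hx⟩, rfl⟩

theorem le_index_of_mk_notMem {L : Subgroup (centralProduct binaryTetrahedral)}
    (hL : centralProduct.mk (-1, 1) ∉ L) : 24 ≤ L.index := by
  have hM := card_le_of_notMem_prod (L.comap centralProduct.mk) hL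
    (by rwa [mem_comap, ← centralProduct.mk_inl_eq_mk_inr neg_one_mem_center])
  have hcard := card_mul_index (L.comap centralProduct.mk)
  have hindex :=
    index_comap_of_surjective L (centralProduct.mk_surjective (G := binaryTetrahedral))
  rw [hindex, Nat.card_prod, natCard_eq] at hcard
  nlinarith

end binaryTetrahedral

open Subgroup centralProduct binaryTetrahedral in
/-- Every core-free subgroup of the central product `T ∘ T` of two binary tetrahedral
groups has index at least `24`; hence `μ(T ∘ T) = 24`. -/
theorem corefree_index_TT_and_mu :
    (∀ L : Subgroup (centralProduct binaryTetrahedral),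
        L.normalCore = ⊥ → 24 ≤ L.index) ∧
      minFaithfulDegree (centralProduct binaryTetrahedral) = 24 := by
  have hz : mk ((-1 : binaryTetrahedral), 1) ≠ 1 := mk_inl_ne_one (by decide)
  refine ⟨fun L hL => le_index_of_mk_notMem fun hzL => hz ?_,
    minFaithfulDegree_eq ?_ fun _ => le_of_injective_perm_fin hz fun _ => le_index_of_mk_notMem⟩
  · simpa [hL] using mem_normalCore_of_mem_center (mk_inl_mem_center neg_one_mem_center) hzL
  · rw [← natCard_eq, ← index_range_diag mul_self_eq_one_of_mem_center]
    exact exists_injective_perm_fin_index_of_normalCore_eq_bot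
      (normalCore_range_diag mul_self_eq_one_of_mem_center)
end

section
/- If a finite group G has a unique minimal normal subgroup, then every minimal faithful permutation representation of G is transitive; equivalently, μ(G) equals the minimal index of a core-free subgroup of G. -/
/-- `Equiv.permCongr` as a `MulEquiv`. -/
def permCongrMulEquiv {α β : Type*} (e : α ≃ β) : Equiv.Perm α ≃* Equiv.Perm β :=
  { Equiv.permCongr e with
    map_mul' := fun p q => by
      ext x
      simp [Equiv.permCongr_apply, Equiv.Perm.mul_apply] }

/-- A core-free subgroup of index `d` gives a faithful degree-`d` permutation
representation. -/
theorem exists_faithful_of_corefree {G : Type*} [Group G] [Finite G] (H : Subgroup G)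
    (hc : H.normalCore = ⊥) :
    ∃ f : G →* Equiv.Perm (Fin H.index), Function.Injective f := by
  have e : (G ⧸ H) ≃ Fin H.index := Finite.equivFinOfCardEq rfl
  refine ⟨(permCongrMulEquiv e).toMonoidHom.comp (MulAction.toPermHom G (G ⧸ H)), ?_⟩
  rw [MonoidHom.coe_comp]
  refine Function.Injective.comp (MulEquiv.injective _) ?_
  rw [← MonoidHom.ker_eq_bot_iff, ← Subgroup.normalCore_eq_ker, hc]

/-- If a finite group `G` has a unique minimal normal subgroup, then `μ(G)` equals
the minimal index of a core-free subgroup of `G` (equivalently, every minimal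
faithful permutation representation of `G` is transitive). -/
theorem mu_eq_min_corefree_index (G : Type*) [Group G] [Finite G]
    (hu : ∃ N : Subgroup G, N.Normal ∧ N ≠ ⊥ ∧
      ∀ M : Subgroup G, M.Normal → M ≠ ⊥ → N ≤ M) :
    minFaithfulDegree G =
      sInf {d : ℕ | ∃ H : Subgroup G, H.normalCore = ⊥ ∧ H.index = d} := by
  obtain ⟨N, hNnorm, hNbot, hNmin⟩ := hu
  have hbot : (⊥ : Subgroup G).normalCore = ⊥ := le_bot_iff.mp (Subgroup.normalCore_le ⊥)
  have hSne : {d : ℕ | ∃ H : Subgroup G, H.normalCore = ⊥ ∧ H.index = d}.Nonempty :=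
    ⟨(⊥ : Subgroup G).index, ⊥, hbot, rfl⟩
  have hMne : {n : ℕ | ∃ f : G →* Equiv.Perm (Fin n), Function.Injective f}.Nonempty :=
    ⟨(⊥ : Subgroup G).index, exists_faithful_of_corefree ⊥ hbot⟩
  apply le_antisymm
  · -- μ(G) ≤ min corefree index
    obtain ⟨H, hHc, hHd⟩ := Nat.sInf_mem hSne
    rw [← hHd]
    exact Nat.sInf_le (exists_faithful_of_corefree H hHc)
  · -- min corefree index ≤ μ(G)
    set n := minFaithfulDegree G with hn
    have hmem : ∃ f : G →* Equiv.Perm (Fin n), Function.Injective f :=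
      Nat.sInf_mem hMne
    obtain ⟨f, hf⟩ := hmem
    -- action of G on Fin n via f
    letI : MulAction G (Fin n) := MulAction.compHom (Fin n) f
    have hsmul : ∀ (g : G) (x : Fin n), g • x = f g x := fun g x => rfl
    -- some stabilizer is core-free
    have : ∃ a : Fin n, (MulAction.stabilizer G a).normalCore = ⊥ := by
      by_contra h
      push_neg at h
      have hNle : ∀ a : Fin n, N ≤ MulAction.stabilizer G a := fun a =>
        le_trans (hNmin _ (Subgroup.normalCore_normal _) (h a)) (Subgroup.normalCore_le _)
      apply hNbot
      rw [eq_bot_iff]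
      intro g hg
      have : f g = 1 := Equiv.ext fun x => by
        rw [← hsmul]
        exact hNle x hg
      simpa [Subgroup.mem_bot] using hf (by simpa using this)
    obtain ⟨a, ha⟩ := this
    have hidx : (MulAction.stabilizer G a).index ≤ n := by
      have horb : (MulAction.stabilizer G a).index = Nat.card (MulAction.orbit G a) := by
        rw [Subgroup.index, Nat.card_congr (MulAction.orbitEquivQuotientStabilizer G a)]
      rw [horb]
      calc Nat.card (MulAction.orbit G a) ≤ Nat.card (Fin n) :=
            Nat.card_le_card_of_injective _ Subtype.val_injective
        _ = n := Nat.card_eq_fintype_card.trans (Fintype.card_fin n)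
    exact le_trans (Nat.sInf_le ⟨_, ha, rfl⟩) hidx
end

section
/- If G is a finite group with a unique minimal normal subgroup N ≅ C_p, and L is a subgroup of G of minimal index among subgroups not containing N, then μ(G) = |G : L|. -/
/-- If `G` has a unique minimal normal subgroup `N ≅ C_p` (central of prime order)
and `L` is of minimal index among subgroups not containing `N`, then `μ(G) = |G : L|`. -/
theorem mu_eq_index_of_unique_minimal (G : Type*) [Group G] [Finite G]
    (p : ℕ) (hp : p.Prime) (N : Subgroup G) (hNn : N.Normal)
    (hNc : N ≤ Subgroup.center G) (hNcard : Nat.card N = p)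
    (huniq : ∀ M : Subgroup G, M.Normal → M ≠ ⊥ → N ≤ M)
    (L : Subgroup G) (hL : ¬N ≤ L)
    (hmin : ∀ L' : Subgroup G, ¬N ≤ L' → L.index ≤ L'.index) :
    minFaithfulDegree G = L.index := by
  have hNne : N ≠ ⊥ := by
    intro h
    rw [h] at hNcard
    simp at hNcard
    exact hp.one_lt.ne' hNcard.symm
  -- membership: G embeds in Perm (Fin L.index)
  have hker : (MulAction.toPermHom G (G ⧸ L)).ker = ⊥ := by
    rw [← Subgroup.normalCore_eq_ker]
    by_contra h
    exact hL ((huniq _ (Subgroup.normalCore_normal L) h).trans (Subgroup.normalCore_le L))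
  have hcard : Nat.card (G ⧸ L) = L.index := rfl
  have : Finite (G ⧸ L) := Quotient.finite _
  have : Fintype (G ⧸ L) := Fintype.ofFinite _
  obtain ⟨e⟩ : Nonempty (G ⧸ L ≃ Fin L.index) := by
    have : Fintype.card (G ⧸ L) = L.index := by
      rw [← hcard, Nat.card_eq_fintype_card]
    exact ⟨Fintype.equivFinOfCardEq this⟩
  let φ : Equiv.Perm (G ⧸ L) →* Equiv.Perm (Fin L.index) :=
    { toFun := e.permCongr
      map_one' := by ext x; simp
      map_mul' := by intro a b; ext x; simp }
  have hmem : L.index ∈ {n : ℕ | ∃ f : G →* Equiv.Perm (Fin n), Function.Injective f} := by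
    refine ⟨φ.comp (MulAction.toPermHom G (G ⧸ L)), ?_⟩
    have h1 : Function.Injective (MulAction.toPermHom G (G ⧸ L)) :=
      (MulAction.toPermHom G (G ⧸ L)).ker_eq_bot_iff.mp hker
    exact (e.permCongr.injective).comp h1
  -- lower bound
  have hlb : ∀ n ∈ {n : ℕ | ∃ f : G →* Equiv.Perm (Fin n), Function.Injective f},
      L.index ≤ n := by
    rintro n ⟨f, hf⟩
    letI : MulAction G (Fin n) := MulAction.compHom _ f
    have hstab : ∃ x : Fin n, ¬N ≤ MulAction.stabilizer G x := by
      by_contra h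
      push_neg at h
      apply hNne
      rw [eq_bot_iff]
      intro g hg
      have hfg : f g = 1 := by
        ext x
        have := h x hg
        rw [MulAction.mem_stabilizer_iff, MulAction.compHom_smul_def] at this
        exact congrArg Fin.val this
      rw [Subgroup.mem_bot]
      exact hf (by rw [hfg, map_one])
    obtain ⟨x, hx⟩ := hstab
    calc L.index ≤ (MulAction.stabilizer G x).index := hmin _ hx
      _ = (MulAction.orbit G x).ncard := MulAction.index_stabilizer G x
      _ ≤ (Set.univ : Set (Fin n)).ncard := Set.ncard_le_ncard (Set.subset_univ _)
        Set.finite_univ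
      _ = n := by rw [Set.ncard_univ, Nat.card_eq_fintype_card, Fintype.card_fin]
  exact le_antisymm (Nat.sInf_le hmem) (hlb _ (Nat.sInf_mem ⟨_, hmem⟩))
end
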